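/- arXiv:1802.03744 — 2 statements merged into one kernel-verified Lean document; each statement's English description precedes it below -/
import Mathlib

section
/- For an object A of Set^𝕋, the unique morphism A → 1 to the terminal presheaf is invariant under clock introduction if and only if A is isomorphic to a constant presheaf (i.e. to a constant functor 𝕋 → Set). -/
open CategoryTheory CategoryTheory.Limits Opposite

/-- A time object: a finite set of clocks together with the number of ticks left on each. -/
structure TimeObj (C : Type) where
  E : Finset C
  d : {x // x ∈ E} → ℕ

/-- A morphism of time objects. -/
structure TimeHom {C : Type} (A B : TimeObj C) where
  toFun : {x // x ∈ A.E} → {x // x ∈ B.E}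
  le : ∀ x, B.d (toFun x) ≤ A.d x

theorem TimeHom.ext' {C : Type} {A B : TimeObj C} {f g : TimeHom A B}
    (h : f.toFun = g.toFun) : f = g := by
  cases f; cases g; cases h; rfl

/-- The category 𝕋 of time objects. -/
instance TimeCat (C : Type) : Category (TimeObj C) where
  Hom := TimeHom
  id _ := ⟨fun x => x, fun _ => le_rfl⟩
  comp f g := ⟨TimeHom.toFun g ∘ TimeHom.toFun f,
    fun x => le_trans (TimeHom.le g _) (TimeHom.le f _)⟩
  id_comp _ := rfl
  comp_id _ := rfl
  assoc _ _ _ := rfl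

/-- The time object `({λ}, n)`. -/
def single (C : Type) (l : C) (n : ℕ) : TimeObj C :=
  ⟨{l}, fun _ => n⟩

/-- The object of clocks 𝒞 in `Set^𝕋`. -/
def Clocks (C : Type) : TimeObj C ⥤ Type where
  obj A := {x // x ∈ A.E}
  map f := TypeCat.ofHom (TimeHom.toFun f)
  map_id _ := rfl
  map_comp _ _ := rfl

open MonoidalCategory

/-- In a category with (chosen) finite products, a morphism `p : A ⟶ B` is
*orthogonal* to an object `X` if every commuting square whose left edge is a
projection `Y ⊗ X ⟶ Y` and whose right edge is `p` has a unique diagonal filler. -/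
def OrthogonalTo {𝒞 : Type u} [Category.{v} 𝒞] [CartesianMonoidalCategory 𝒞]
    {A B : 𝒞} (p : A ⟶ B) (X : 𝒞) : Prop :=
  ∀ (Y : 𝒞) (f : Y ⊗ X ⟶ A) (g : Y ⟶ B),
    f ≫ p = CartesianMonoidalCategory.fst Y X ≫ g →
      ∃! h : Y ⟶ A, CartesianMonoidalCategory.fst Y X ≫ h = f ∧ h ≫ p = g

/-- A morphism of presheaves on 𝕋 is invariant under clock introduction if it is
orthogonal to every representable `y({λ}, n)`. -/
def InvariantUnderClockIntro {C : Type} {A B : TimeObj C ⥤ Type} (p : A ⟶ B) : Prop :=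
  ∀ (l : C) (n : ℕ), OrthogonalTo p (coyoneda.obj (op (single C l n)))

/-- The time object `(ℰ ∪ {λ}, δ[λ ↦ n])`. -/
def TimeObj.extend {C : Type} [DecidableEq C] (A : TimeObj C) (l : C) (n : ℕ) :
    TimeObj C where
  E := insert l A.E
  d x := if h : x.1 ∈ A.E then A.d ⟨x.1, h⟩ else n

/-- The inclusion `(ℰ, δ) ⟶ (ℰ ∪ {λ}, δ[λ ↦ n])`. -/
def inclExtend {C : Type} [DecidableEq C] (A : TimeObj C) (l : C) (n : ℕ) :
    A ⟶ A.extend l n :=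
  ⟨fun x => ⟨x.1, Finset.mem_insert_of_mem x.2⟩, fun x => by
    dsimp [TimeObj.extend]
    rw [if_pos x.2]⟩

/-!
If `m ∉ ℰ`, the time object `(ℰ ∪ {m}, δ[m ↦ n])` is the coproduct of `(ℰ, δ)` and `({λ}, n)` in
𝕋, so co-Yoneda turns it into the product `y(ℰ, δ) × y({λ}, n)`. Hence, by Yoneda, orthogonality
of `A ⟶ 1` to `y({λ}, n)`, tested against `y(ℰ, δ)`, says that `A(ℰ, δ) → A(ℰ ∪ {m}, δ[m ↦ n])`
is bijective. Adding the clocks of a time object one at a time to the initial (empty) time object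
shows that `A` is isomorphic to the constant presheaf on `A(∅)`.

Conversely, let `F : Y × y({λ}, n) ⟶ S` with `S` constant. As there are infinitely many clocks,
every `(ℰ, δ)` has a fresh clock `m`. For `z ∈ Y(ℰ, δ)` and `v : (ℰ, δ) ⟶ U`, every pair
`(v z, σ)` over `U` is the image of the generic pair `(z, λ ↦ m)` over `(ℰ ∪ {m}, δ[m ↦ n])`
along a map to `U`; so `F (v z, σ)` only depends on `z`, which gives the unique factorization of
`F` through the projection.
-/

open CartesianMonoidalCategory

section Orthogonality

variable {𝒞 : Type u} [Category.{v} 𝒞] [CartesianMonoidalCategory 𝒞] [HasTerminal 𝒞]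

theorem orthogonalTo_terminal_from_iff {A : 𝒞} (X : 𝒞) :
    OrthogonalTo (terminal.from A) X ↔
      ∀ Y : 𝒞, Function.Bijective (fun h : Y ⟶ A => fst Y X ≫ h) := by
  refine forall_congr' fun Y => ?_
  simp only [Function.bijective_iff_existsUnique, terminal.comp_from]
  refine ⟨fun h f => by simpa using h f (terminal.from Y) (terminal.hom_ext _ _), ?_⟩
  intro h f g _
  obtain rfl : g = terminal.from Y := terminal.hom_ext _ _
  simpa using h f

theorem OrthogonalTo.of_iso {A B : 𝒞} (e : A ≅ B) {X : 𝒞}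
    (hA : OrthogonalTo (terminal.from A) X) : OrthogonalTo (terminal.from B) X := by
  rw [orthogonalTo_terminal_from_iff] at hA ⊢
  intro Y
  have hcomm : (fun h : Y ⟶ B => fst Y X ≫ h) ∘ e.homToEquiv =
      e.homToEquiv ∘ (fun h : Y ⟶ A => fst Y X ≫ h) := by
    funext h
    simp
  rw [← Equiv.bijective_comp e.homToEquiv, hcomm, Equiv.comp_bijective]
  exact hA Y

end Orthogonality

namespace TimeObj

variable {C : Type}

def isoMk {T U : TimeObj C} (hE : T.E = U.E)
    (hd : ∀ x (hT : x ∈ T.E) (hU : x ∈ U.E), T.d ⟨x, hT⟩ = U.d ⟨x, hU⟩) : T ≅ U where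
  hom := ⟨fun x => ⟨x.1, hE ▸ x.2⟩, fun _ => (hd _ _ _).ge⟩
  inv := ⟨fun x => ⟨x.1, hE.symm ▸ x.2⟩, fun _ => (hd _ _ _).le⟩
  hom_inv_id := TimeHom.ext' rfl
  inv_hom_id := TimeHom.ext' rfl

def isInitialOfEmpty {T : TimeObj C} (hT : T.E = ∅) : IsInitial T :=
  have : IsEmpty {x // x ∈ T.E} := ⟨fun x => by simpa [hT] using x.2⟩
  IsInitial.ofUniqueHom (fun _ => ⟨isEmptyElim, isEmptyElim⟩)
    (fun _ _ => TimeHom.ext' (funext isEmptyElim))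

def empty (C : Type) : TimeObj C :=
  ⟨∅, fun x => absurd x.2 (Finset.notMem_empty x.1)⟩

def isInitialEmpty : IsInitial (empty C) :=
  isInitialOfEmpty rfl

noncomputable def fresh [Infinite C] (T : TimeObj C) : C :=
  (Infinite.exists_notMem_finset T.E).choose

theorem fresh_notMem [Infinite C] (T : TimeObj C) : T.fresh ∉ T.E :=
  (Infinite.exists_notMem_finset T.E).choose_spec

variable [DecidableEq C] {T U : TimeObj C} {l m : C} {n : ℕ}

def toExtend (l : C) (hm : m ∉ T.E) (n : ℕ) : single C l n ⟶ T.extend m n :=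
  ⟨fun _ => ⟨m, Finset.mem_insert_self m T.E⟩, fun _ => by simp [TimeObj.extend, single, hm]⟩

def extendDesc (m : C) (u : T ⟶ U) (σ : single C l n ⟶ U) : T.extend m n ⟶ U where
  toFun x := if h : x.1 ∈ T.E then u.toFun ⟨x.1, h⟩ else σ.toFun ⟨l, Finset.mem_singleton_self l⟩
  le x := by
    by_cases h : x.1 ∈ T.E
    · simpa [TimeObj.extend, h] using TimeHom.le u ⟨x.1, h⟩
    · simpa [TimeObj.extend, single, h] using TimeHom.le σ ⟨l, Finset.mem_singleton_self l⟩

@[simp]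
theorem inclExtend_extendDesc (u : T ⟶ U) (σ : single C l n ⟶ U) :
    inclExtend T m n ≫ extendDesc m u σ = u :=
  TimeHom.ext' <| funext fun x => dif_pos x.2

@[simp]
theorem toExtend_extendDesc (hm : m ∉ T.E) (u : T ⟶ U) (σ : single C l n ⟶ U) :
    toExtend l hm n ≫ extendDesc m u σ = σ := by
  refine TimeHom.ext' <| funext fun x => ?_
  obtain rfl : x = ⟨l, Finset.mem_singleton_self l⟩ := Subtype.ext (Finset.mem_singleton.mp x.2)
  exact dif_neg hm

theorem extend_hom_ext (hm : m ∉ T.E) {f g : T.extend m n ⟶ U}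
    (h₁ : inclExtend T m n ≫ f = inclExtend T m n ≫ g)
    (h₂ : toExtend l hm n ≫ f = toExtend l hm n ≫ g) : f = g := by
  refine TimeHom.ext' <| funext fun x => ?_
  by_cases h : x.1 ∈ T.E
  · exact congrFun (congrArg TimeHom.toFun h₁) ⟨x.1, h⟩
  · obtain rfl : x = ⟨m, Finset.mem_insert_self m T.E⟩ :=
      Subtype.ext ((Finset.mem_insert.mp x.2).resolve_right h)
    exact congrFun (congrArg TimeHom.toFun h₂) ⟨l, Finset.mem_singleton_self l⟩

theorem extendDesc_comp {V : TimeObj C} (hm : m ∉ T.E) (u : T ⟶ U) (σ : single C l n ⟶ U)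
    (v : U ⟶ V) : extendDesc m u σ ≫ v = extendDesc m (u ≫ v) (σ ≫ v) :=
  extend_hom_ext (l := l) hm (by simp [← Category.assoc]) (by simp [← Category.assoc])

def erase (T : TimeObj C) (c : C) : TimeObj C :=
  ⟨T.E.erase c, fun x => T.d ⟨x.1, Finset.mem_of_mem_erase x.2⟩⟩

def eraseExtendIso {c : C} (hc : c ∈ T.E) : (T.erase c).extend c (T.d ⟨c, hc⟩) ≅ T :=
  isoMk (Finset.insert_erase hc) fun x hx _ => by
    change (if h : x ∈ (T.erase c).E then _ else _) = _
    by_cases h : x ∈ (T.erase c).E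
    · rw [dif_pos h]
      rfl
    · obtain rfl : x = c := (Finset.mem_insert.mp hx).resolve_right h
      rw [dif_neg h]

end TimeObj

open TimeObj

section InvariantIsConstant

variable {C : Type} [DecidableEq C] {T : TimeObj C} {m : C}

def coyonedaExtendIso (hm : m ∉ T.E) (l : C) (n : ℕ) :
    coyoneda.obj (op T) ⊗ coyoneda.obj (op (single C l n)) ≅
      coyoneda.obj (op (T.extend m n)) :=
  NatIso.ofComponents
    (fun _ => Equiv.toIso
      { toFun := fun p => extendDesc m p.1 p.2
        invFun := fun w => (inclExtend T m n ≫ w, toExtend l hm n ≫ w)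
        left_inv := fun p => Prod.ext (inclExtend_extendDesc _ _) (toExtend_extendDesc hm _ _)
        right_inv := fun w => extend_hom_ext (l := l) hm (by simp) (by simp) })
    (fun v => by
      ext p
      exact (extendDesc_comp hm _ _ v).symm)

theorem fst_eq_coyonedaExtendIso_hom_comp (hm : m ∉ T.E) (l : C) (n : ℕ) :
    fst _ _ = (coyonedaExtendIso hm l n).hom ≫ coyoneda.map (inclExtend T m n).op := by
  ext U p
  exact (inclExtend_extendDesc p.1 p.2).symm

theorem bijective_map_inclExtend {A : TimeObj C ⥤ Type} {l : C} {n : ℕ}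
    (hA : OrthogonalTo (terminal.from A) (coyoneda.obj (op (single C l n)))) (hm : m ∉ T.E) :
    Function.Bijective (A.map (inclExtend T m n)) := by
  have hfst := (orthogonalTo_terminal_from_iff _).mp hA (coyoneda.obj (op T))
  have hprecomp : Function.Bijective
      (fun h : coyoneda.obj (op T) ⟶ A => coyoneda.map (inclExtend T m n).op ≫ h) := by
    rw [← Function.Bijective.of_comp_iff' (coyonedaExtendIso hm l n).symm.homFromEquiv.bijective]
    convert hfst using 1
    funext h
    simp [fst_eq_coyonedaExtendIso_hom_comp hm l n]
  have hmap : ⇑(A.map (inclExtend T m n)) = coyonedaEquiv ∘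
      (fun h => coyoneda.map (inclExtend T m n).op ≫ h) ∘ coyonedaEquiv.symm := by
    funext a
    simp [← coyonedaEquiv_naturality]
  rw [hmap, Equiv.comp_bijective, Equiv.bijective_comp]
  exact hprecomp

theorem InvariantUnderClockIntro.bijective_map_isInitialEmpty_to {A : TimeObj C ⥤ Type}
    (hA : InvariantUnderClockIntro (terminal.from A)) (T : TimeObj C) :
    Function.Bijective (A.map (isInitialEmpty.to T)) := by
  obtain ⟨k, hk⟩ : ∃ k, T.E.card = k := ⟨_, rfl⟩
  induction k generalizing T with
  | zero =>
    let e := isInitialEmpty.uniqueUpToIso (isInitialOfEmpty (Finset.card_eq_zero.mp hk))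
    exact (isIso_iff_bijective (A.map e.hom)).mp inferInstance
  | succ k ih =>
    obtain ⟨c, hc⟩ := Finset.card_pos.mp (by omega : 0 < T.E.card)
    have hfactor : isInitialEmpty.to T =
        isInitialEmpty.to (T.erase c) ≫ inclExtend _ c _ ≫ (eraseExtendIso hc).hom :=
      isInitialEmpty.hom_ext _ _
    have hiso := (isIso_iff_bijective (A.map (eraseExtendIso hc).hom)).mp inferInstance
    have hextend := bijective_map_inclExtend (T := T.erase c) (hA c (T.d ⟨c, hc⟩))
      (Finset.notMem_erase c T.E)
    have hcard : (T.erase c).E.card = k := by simp [erase, Finset.card_erase_of_mem hc, hk]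
    rw [hfactor, A.map_comp, A.map_comp]
    exact (hiso.comp hextend).comp (ih _ hcard)

noncomputable def InvariantUnderClockIntro.isoConst {A : TimeObj C ⥤ Type}
    (hA : InvariantUnderClockIntro (terminal.from A)) :
    A ≅ (Functor.const (TimeObj C)).obj (A.obj (empty C)) :=
  (NatIso.ofComponents
    (fun T => (Equiv.ofBijective _ (hA.bijective_map_isInitialEmpty_to T)).toIso)
    (fun u => by
      ext x
      simp [← Functor.map_comp_apply, isInitialEmpty.to_comp])).symm

end InvariantIsConstant

section ConstantIsInvariant

variable {C : Type} [DecidableEq C] [Infinite C] {S : Type} {Y : TimeObj C ⥤ Type} {l : C} {n : ℕ}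
  (F : Y ⊗ coyoneda.obj (op (single C l n)) ⟶ (Functor.const (TimeObj C)).obj S)

noncomputable def fstLiftApp {T : TimeObj C} (z : Y.obj T) : S :=
  F.app (T.extend T.fresh n)
    ((Y.map (inclExtend T T.fresh n) z, toExtend l T.fresh_notMem n) : Y.obj _ × _)

theorem app_map_eq_fstLiftApp {T U : TimeObj C} (z : Y.obj T) (v : T ⟶ U)
    (σ : single C l n ⟶ U) :
    F.app U ((Y.map v z, σ) : Y.obj U × (single C l n ⟶ U)) = fstLiftApp F z := by
  set w := extendDesc T.fresh v σ
  set p : Y.obj _ × _ := (Y.map (inclExtend T T.fresh n) z, toExtend l T.fresh_notMem n)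
  have hp : (Y ⊗ coyoneda.obj (op (single C l n))).map w p = (Y.map v z, σ) :=
    Prod.ext (show Y.map w (Y.map (inclExtend T T.fresh n) z) = Y.map v z by
        rw [← Functor.map_comp_apply, inclExtend_extendDesc])
      (toExtend_extendDesc T.fresh_notMem _ _)
  rw [← hp]
  exact NatTrans.naturality_apply F w p

noncomputable def fstLift : Y ⟶ (Functor.const (TimeObj C)).obj S where
  app _ := TypeCat.ofHom (fstLiftApp F)
  naturality T U u := by
    ext z
    change fstLiftApp F (Y.map u z) = fstLiftApp F z
    rw [fstLiftApp, ← Functor.map_comp_apply, app_map_eq_fstLiftApp]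

theorem fst_comp_fstLift : fst _ _ ≫ fstLift F = F := by
  ext T ⟨z, σ⟩
  change fstLiftApp F z = _
  rw [← app_map_eq_fstLiftApp F z (𝟙 T) σ, Functor.map_id_apply]
  rfl

theorem eq_fstLift {h : Y ⟶ (Functor.const (TimeObj C)).obj S} (hF : fst _ _ ≫ h = F) :
    h = fstLift F := by
  ext T z
  calc h.app T z = h.app _ (Y.map (inclExtend T T.fresh n) z) :=
        (NatTrans.naturality_apply h (inclExtend T T.fresh n) z).symm
    _ = (fst Y (coyoneda.obj (op (single C l n))) ≫ h).app (T.extend T.fresh n)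
          ((Y.map (inclExtend T T.fresh n) z, toExtend l T.fresh_notMem n) : Y.obj _ × _) := rfl
    _ = fstLiftApp F z := by
      rw [hF]
      rfl

theorem orthogonalTo_terminal_from_const (S : Type) (l : C) (n : ℕ) :
    OrthogonalTo (terminal.from ((Functor.const (TimeObj C)).obj S))
      (coyoneda.obj (op (single C l n))) := by
  refine (orthogonalTo_terminal_from_iff _).mpr fun Y => ⟨fun h₁ h₂ h => ?_, fun F => ?_⟩
  · exact (eq_fstLift _ h).trans (eq_fstLift _ rfl).symm
  · exact ⟨fstLift F, fst_comp_fstLift F⟩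

end ConstantIsInvariant

theorem statement_7_general (C : Type) [Infinite C] (A : TimeObj C ⥤ Type) :
    InvariantUnderClockIntro (Limits.terminal.from A) ↔
      ∃ S : Type, Nonempty (A ≅ (Functor.const (TimeObj C)).obj S) := by
  classical
  refine ⟨fun hA => ⟨_, ⟨hA.isoConst⟩⟩, ?_⟩
  rintro ⟨S, ⟨e⟩⟩ l n
  exact (orthogonalTo_terminal_from_const S l n).of_iso e.symm

/-- For a presheaf `A` on 𝕋, the unique map `A ⟶ 1` is invariant under clock
introduction iff `A` is isomorphic to a constant presheaf. -/
theorem statement_7 (C : Type) [Countable C] [Infinite C] (A : TimeObj C ⥤ Type) :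
    InvariantUnderClockIntro (Limits.terminal.from A) ↔
      ∃ S : Type, Nonempty (A ≅ (Functor.const (TimeObj C)).obj S) :=
  statement_7_general C A
end

section
/- If a morphism p : A → B in Set^𝕋 is invariant under clock introduction, then p is orthogonal to the object of clocks 𝒞. -/
open CategoryTheory CategoryTheory.Limits Opposite

open MonoidalCategory

/-
A clock `x ∈ ℰ` with `δ(x) ≤ n` is the image of the generic clock of `y({λ}, n)` under the
morphism `({λ}, n) ⟶ (ℰ, δ)` sending `λ` to `x`. Hence the maps `y({λ}, n) ⟶ 𝒞` jointly cover `𝒞`,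
and they are compatible with the maps `y({λ}, 0) ⟶ y({λ}, n)`. The diagonal fillers for the squares
restricted along `y({λ}, n) ⟶ 𝒞` therefore all agree with the one at level `0`, and this common
filler is the unique filler for the original square.
-/

section Orthogonality

open CartesianMonoidalCategory

variable {𝒞 : Type u} [Category.{v} 𝒞] [CartesianMonoidalCategory 𝒞]

theorem orthogonalTo_of_jointlyEpi {ι : Type*} {A B X : 𝒞} (p : A ⟶ B) {X' : ι → 𝒞}
    (j : ∀ i, X' i ⟶ X) (i₀ : ι) (k : ∀ i, X' i₀ ⟶ X' i) (hk : ∀ i, k i ≫ j i = j i₀)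
    (hp : ∀ i, OrthogonalTo p (X' i))
    (hj : ∀ (Y Z : 𝒞) (u v : Y ⊗ X ⟶ Z), (∀ i, Y ◁ j i ≫ u = Y ◁ j i ≫ v) → u = v) :
    OrthogonalTo p X := by
  intro Y f g hsq
  have sq : ∀ i, (Y ◁ j i ≫ f) ≫ p = fst Y (X' i) ≫ g := fun i => by
    rw [Category.assoc, hsq, ← Category.assoc, whiskerLeft_fst]
  choose H hH huniq using fun i => hp i Y _ g (sq i)
  have H_eq : ∀ i, H i = H i₀ := fun i => huniq i₀ (H i) ⟨by
    rw [← whiskerLeft_fst Y (k i), Category.assoc, (hH i).1, ← Category.assoc,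
      ← MonoidalCategory.whiskerLeft_comp, hk], (hH i).2⟩
  refine ⟨H i₀, ⟨hj _ _ _ _ fun i => ?_, (hH i₀).2⟩, fun h ⟨hfst, hpg⟩ => huniq i₀ h ⟨?_, hpg⟩⟩
  · rw [← H_eq i, ← Category.assoc, whiskerLeft_fst, (hH i).1]
  · rw [← hfst, ← Category.assoc, whiskerLeft_fst]

end Orthogonality

variable {C : Type}

def single.homOfLE (l : C) {m n : ℕ} (h : m ≤ n) : single C l n ⟶ single C l m :=
  ⟨id, fun _ => h⟩

def clockOfSingle (l : C) (n : ℕ) : coyoneda.obj (op (single C l n)) ⟶ Clocks C :=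
  coyonedaEquiv.symm ⟨l, Finset.mem_singleton_self l⟩

theorem whiskerLeft_clockOfSingle_jointlyEpi (l : C) (Y Z : TimeObj C ⥤ Type)
    (u v : Y ⊗ Clocks C ⟶ Z)
    (h : ∀ n, Y ◁ clockOfSingle l n ≫ u = Y ◁ clockOfSingle l n ≫ v) : u = v := by
  ext E ⟨y, x⟩
  let σ : single C l (E.d x) ⟶ E := ⟨fun _ => x, fun _ => le_rfl⟩
  exact types_congr_hom (NatTrans.congr_app (h (E.d x)) E)
    (show (Y ⊗ coyoneda.obj (op (single C l (E.d x)))).obj E from (y, σ))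

theorem statement_9_general (C : Type) [Infinite C]
    {A B : TimeObj C ⥤ Type} (p : A ⟶ B) (h : InvariantUnderClockIntro p) :
    OrthogonalTo p (Clocks C) := by
  obtain ⟨l⟩ : Nonempty C := inferInstance
  exact orthogonalTo_of_jointlyEpi p (clockOfSingle l) 0
    (fun n => coyoneda.map (single.homOfLE l (Nat.zero_le n)).op) (fun _ => rfl) (h l)
    (whiskerLeft_clockOfSingle_jointlyEpi l)

/-- If a morphism of presheaves on 𝕋 is invariant under clock introduction, then it
is orthogonal to the object of clocks 𝒞. -/
theorem statement_9 (C : Type) [Countable C] [Infinite C]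
    {A B : TimeObj C ⥤ Type} (p : A ⟶ B) (h : InvariantUnderClockIntro p) :
    OrthogonalTo p (Clocks C) :=
  statement_9_general C p h
end
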